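/- Let n ≥ 2, a ∈ ℂ nonzero and B an invertible hermitian (n−1)×(n−1) complex matrix. Then W := { [[1,v,w],[0,I_{n−1},y],[0,0,1]] : w ∈ ℂ, v a row vector and y a column vector in ℂ^{n−1}, B·y + v†·a = 0, y†By + ā·w + a·w̄ = 0 } is a subgroup of GL(n+1,ℂ), and its centre is exactly { [[1,0,w],[0,I_{n−1},0],[0,0,1]] : w ∈ i·a·ℝ }, i.e. the elements with v = 0, y = 0 and w = i·a·x for some real x. -/

import Mathlib

/-!
Writing `mat w v y` for `[[1, v, w], [0, 1, y], [0, 0, 1]]`, these matrices multiply like a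
Heisenberg group: `mat w₁ v₁ y₁ * mat w₂ v₂ y₂ = mat (w₁ + w₂ + v₁ ⬝ᵥ y₂) (v₁ + v₂) (y₁ + y₂)`.
The linear condition `B y + a v̄ = 0` turns `ā (v₁ ⬝ᵥ y₂)` into `-y₁ᴴ B y₂`; this makes the
quadratic condition stable under products and inverses, and shows that two elements of `W`
commute iff `y₁ᴴ B y₂` is real. Every `y` occurs in `W`, so for a central element the linear form
`z ↦ yᴴ B z` is real-valued, hence zero (compare its values at `z` and `i z`), hence `y = 0` as `B`
is invertible. Then `v = 0`, and the quadratic condition says `Re (ā w) = 0`.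
-/

open Matrix Complex ComplexConjugate

theorem Subgroup.mem_center_iff_forall_commute_val {M : Type*} [Monoid M] {H : Subgroup Mˣ}
    {g : H} : g ∈ Subgroup.center H ↔ ∀ h : H, Commute ((h : Mˣ) : M) (g : Mˣ) :=
  Subgroup.mem_center_iff.trans <| forall_congr' fun _ => Subtype.ext_iff.trans Units.ext_iff

theorem Matrix.IsHermitian.conj_star_dotProduct_mulVec {m : Type*} [Fintype m]
    {B : Matrix m m ℂ} (hB : B.IsHermitian) (y z : m → ℂ) :
    conj (star y ⬝ᵥ B *ᵥ z) = star z ⬝ᵥ B *ᵥ y := by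
  change star _ = _
  rw [star_dotProduct, star_star, star_mulVec, hB.eq, dotProduct_mulVec]

theorem Matrix.dotProduct_eq_zero_of_forall_conj_eq {m : Type*} [Fintype m] {u : m → ℂ}
    (h : ∀ z, conj (u ⬝ᵥ z) = u ⬝ᵥ z) (z : m → ℂ) : u ⬝ᵥ z = 0 := by
  have hI := h (I • z)
  rw [dotProduct_smul, smul_eq_mul, map_mul, conj_I, h z] at hI
  have : (2 * I) * (u ⬝ᵥ z) = 0 := by linear_combination -hI
  simpa [I_ne_zero] using this

theorem Complex.conj_mul_add_mul_conj_eq_zero_iff {a : ℂ} (ha : a ≠ 0) (w : ℂ) :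
    conj a * w + a * conj w = 0 ↔ ∃ x : ℝ, w = I * a * x := by
  constructor
  · intro h
    have hre : (conj a * w).re = 0 := by
      have := congrArg re h
      simp at this ⊢
      linarith
    refine ⟨(conj a * w).im / normSq a, ?_⟩
    have ht : conj a * w = (conj a * w).im * I := Complex.ext (by simp [hre]) (by simp)
    have hca : conj a ≠ 0 := by simpa using ha
    rw [ofReal_div, normSq_eq_conj_mul_self, mul_div_assoc', eq_div_iff (mul_ne_zero hca ha)]
    linear_combination a * ht
  · rintro ⟨x, rfl⟩
    simp only [map_mul, conj_I, conj_ofReal]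
    ring

namespace Heisenberg

section Ring

variable {m R : Type*} [DecidableEq m] [CommRing R]

def mat (w : R) (v y : m → R) : Matrix (Fin 1 ⊕ (m ⊕ Fin 1)) (Fin 1 ⊕ (m ⊕ Fin 1)) R :=
  fun i j => match i, j with
    | .inl _, .inl _ => 1
    | .inl _, .inr (.inl j) => v j
    | .inl _, .inr (.inr _) => w
    | .inr (.inl _), .inl _ => 0
    | .inr (.inl i), .inr (.inl j) => if i = j then 1 else 0
    | .inr (.inl i), .inr (.inr _) => y i
    | .inr (.inr _), .inl _ => 0
    | .inr (.inr _), .inr (.inl _) => 0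
    | .inr (.inr _), .inr (.inr _) => 1

theorem mat_zero : (mat 0 0 0 : Matrix (Fin 1 ⊕ (m ⊕ Fin 1)) _ R) = 1 := by
  ext (i | i | i) (j | j | j) <;> simp [mat, one_apply, eq_iff_true_of_subsingleton]

variable [Fintype m]

theorem mat_mul (w₁ w₂ : R) (v₁ v₂ y₁ y₂ : m → R) :
    mat w₁ v₁ y₁ * mat w₂ v₂ y₂ = mat (w₁ + w₂ + v₁ ⬝ᵥ y₂) (v₁ + v₂) (y₁ + y₂) := by
  ext (i | i | i) (j | j | j) <;>
    simp [mat, mul_apply, Fintype.sum_sum_type, dotProduct, ite_mul, mul_ite] <;> ring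

theorem mat_mul_mat_neg (w : R) (v y : m → R) :
    mat w v y * mat (-w + v ⬝ᵥ y) (-v) (-y) = 1 := by
  rw [mat_mul, dotProduct_neg, add_neg_cancel, add_neg_cancel, ← mat_zero]
  congr 1
  ring

theorem mat_neg_mul_mat (w : R) (v y : m → R) :
    mat (-w + v ⬝ᵥ y) (-v) (-y) * mat w v y = 1 := by
  rw [mat_mul, neg_dotProduct, neg_add_cancel, neg_add_cancel, ← mat_zero]
  congr 1
  ring

theorem commute_mat_iff {w₁ w₂ : R} {v₁ v₂ y₁ y₂ : m → R} :
    Commute (mat w₁ v₁ y₁) (mat w₂ v₂ y₂) ↔ v₁ ⬝ᵥ y₂ = v₂ ⬝ᵥ y₁ := by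
  rw [Commute, SemiconjBy, mat_mul, mat_mul, add_comm v₂, add_comm y₂, add_comm w₂]
  exact ⟨fun h => by simpa [mat] using congr_fun₂ h (Sum.inl 0) (Sum.inr (Sum.inr 0)),
    fun h => by rw [h]⟩

def toGL (w : R) (v y : m → R) : GL (Fin 1 ⊕ (m ⊕ Fin 1)) R :=
  ⟨mat w v y, mat (-w + v ⬝ᵥ y) (-v) (-y), mat_mul_mat_neg w v y, mat_neg_mul_mat w v y⟩

end Ring

variable {m : Type*} [Fintype m] {a : ℂ} {B : Matrix m m ℂ}

-- For hermitian `B`, equivalent to `(mat w v y)ᴴ * J * mat w v y = J`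
-- with `J = [[0, 0, a], [0, B, 0], [ā, 0, 0]]`.
variable (a B) in
def IsAdmissible (w : ℂ) (v y : m → ℂ) : Prop :=
  B *ᵥ y + a • star v = 0 ∧ star y ⬝ᵥ B *ᵥ y + conj a * w + a * conj w = 0

namespace IsAdmissible

variable {w : ℂ} {v y : m → ℂ}

theorem conj_mul_dotProduct (hB : B.IsHermitian) (h : IsAdmissible a B w v y) (z : m → ℂ) :
    conj a * (v ⬝ᵥ z) = -(star y ⬝ᵥ B *ᵥ z) := by
  have h' : star (a • star v) = star (-(B *ᵥ y)) := congrArg star (eq_neg_of_add_eq_zero_right h.1)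
  rw [star_smul, star_star, star_neg, star_mulVec, hB.eq] at h'
  rw [dotProduct_mulVec, ← neg_dotProduct, ← h', smul_dotProduct]
  rfl

theorem mul_conj_dotProduct (hB : B.IsHermitian) (h : IsAdmissible a B w v y) (z : m → ℂ) :
    a * conj (v ⬝ᵥ z) = -(star z ⬝ᵥ B *ᵥ y) := by
  simpa [hB.conj_star_dotProduct_mulVec] using congrArg conj (h.conj_mul_dotProduct hB z)

theorem mul (hB : B.IsHermitian) {w₁ w₂ : ℂ} {v₁ v₂ y₁ y₂ : m → ℂ}
    (h₁ : IsAdmissible a B w₁ v₁ y₁) (h₂ : IsAdmissible a B w₂ v₂ y₂) :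
    IsAdmissible a B (w₁ + w₂ + v₁ ⬝ᵥ y₂) (v₁ + v₂) (y₁ + y₂) := by
  constructor
  · simp only [mulVec_add, star_add, smul_add]
    linear_combination h₁.1 + h₂.1
  · simp only [star_add, mulVec_add, dotProduct_add, add_dotProduct, map_add]
    linear_combination h₁.2 + h₂.2 + h₁.conj_mul_dotProduct hB y₂ + h₁.mul_conj_dotProduct hB y₂

theorem inv (hB : B.IsHermitian) (h : IsAdmissible a B w v y) :
    IsAdmissible a B (-w + v ⬝ᵥ y) (-v) (-y) := by
  constructor
  · simp only [mulVec_neg, star_neg, smul_neg, ← neg_add, h.1, neg_zero]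
  · simp only [star_neg, mulVec_neg, dotProduct_neg, neg_dotProduct, neg_neg, map_add, map_neg]
    linear_combination h.conj_mul_dotProduct hB y + h.mul_conj_dotProduct hB y - h.2

end IsAdmissible

theorem exists_isAdmissible (ha : a ≠ 0) (hB : B.IsHermitian) (y : m → ℂ) :
    ∃ w v, IsAdmissible a B w v y := by
  have hq : conj (star y ⬝ᵥ B *ᵥ y) = star y ⬝ᵥ B *ᵥ y := hB.conj_star_dotProduct_mulVec y y
  have hca : conj a ≠ 0 := by simpa using ha
  refine ⟨-(star y ⬝ᵥ B *ᵥ y) / (2 * conj a), -(conj a)⁻¹ • star (B *ᵥ y), ?_, ?_⟩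
  · rw [star_smul, star_star, smul_smul, star_neg, star_inv₀]
    simp [ha]
  · simp only [map_div₀, map_neg, map_mul, conj_conj, hq, map_ofNat]
    field_simp
    ring

variable [DecidableEq m]

variable (a B) in
def subgroup (hB : B.IsHermitian) : Subgroup (GL (Fin 1 ⊕ (m ⊕ Fin 1)) ℂ) where
  carrier := {g | ∃ w v y, (g : Matrix _ _ ℂ) = mat w v y ∧ IsAdmissible a B w v y}
  one_mem' := ⟨0, 0, 0, mat_zero.symm, by simp [IsAdmissible]⟩
  mul_mem' := by
    rintro g h ⟨w₁, v₁, y₁, hg, h₁⟩ ⟨w₂, v₂, y₂, hh, h₂⟩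
    exact ⟨_, _, _, by rw [Units.val_mul, hg, hh, mat_mul], h₁.mul hB h₂⟩
  inv_mem' := by
    rintro g ⟨w, v, y, hg, h⟩
    obtain rfl : g = toGL w v y := Units.ext hg
    exact ⟨_, _, _, rfl, h.inv hB⟩

theorem mem_subgroup_iff {hB : B.IsHermitian} {g : GL (Fin 1 ⊕ (m ⊕ Fin 1)) ℂ} :
    g ∈ subgroup a B hB ↔ ∃ w v y, (g : Matrix _ _ ℂ) = mat w v y ∧ IsAdmissible a B w v y :=
  Iff.rfl

theorem mem_center_subgroup_iff (ha : a ≠ 0) (hB : B.IsHermitian) (hBdet : IsUnit B.det)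
    (g : subgroup a B hB) :
    g ∈ Subgroup.center (subgroup a B hB) ↔
      ∃ x : ℝ, ((g : GL (Fin 1 ⊕ (m ⊕ Fin 1)) ℂ) : Matrix (Fin 1 ⊕ (m ⊕ Fin 1)) _ ℂ) =
        mat (I * a * x) 0 0 := by
  obtain ⟨w, v, y, hg, hadm⟩ := mem_subgroup_iff.mp g.2
  rw [Subgroup.mem_center_iff_forall_commute_val, hg]
  constructor
  · intro hc
    have hreal : ∀ z, conj ((star y ᵥ* B) ⬝ᵥ z) = (star y ᵥ* B) ⬝ᵥ z := fun z => by
      obtain ⟨w', v', hadm'⟩ := exists_isAdmissible ha hB z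
      have hcomm := commute_mat_iff.mp
        (hc ⟨toGL w' v' z, mem_subgroup_iff.mpr ⟨w', v', z, rfl, hadm'⟩⟩)
      rw [← dotProduct_mulVec, hB.conj_star_dotProduct_mulVec]
      linear_combination hadm'.conj_mul_dotProduct hB y - hadm.conj_mul_dotProduct hB z -
        conj a * hcomm
    have hzero : ∀ z, star y ⬝ᵥ B *ᵥ z = 0 := fun z => by
      rw [dotProduct_mulVec]
      exact dotProduct_eq_zero_of_forall_conj_eq hreal z
    have hy : y = 0 :=
      star_eq_zero.mp <| (nondegenerate_of_det_ne_zero hBdet.ne_zero).eq_zero_of_ortho hzero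
    have hv : v = 0 := by simpa [hy, ha] using hadm.1
    obtain ⟨x, hx⟩ := (conj_mul_add_mul_conj_eq_zero_iff ha w).mp (by simpa [hy] using hadm.2)
    exact ⟨x, by rw [hv, hy, hx]⟩
  · rintro ⟨x, hx⟩ h
    obtain ⟨w', v', y', hh, -⟩ := mem_subgroup_iff.mp h.2
    rw [hh, hx, commute_mat_iff, dotProduct_zero, zero_dotProduct]

end Heisenberg

theorem stmt16
    (n : ℕ)
    (a : ℂ) (ha : a ≠ 0)
    (B : Matrix (Fin (n - 1)) (Fin (n - 1)) ℂ) (hB : B.IsHermitian) (hBdet : IsUnit B.det) :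
    ∃ Wgrp : Subgroup (GL (Fin 1 ⊕ (Fin (n - 1) ⊕ Fin 1)) ℂ),
      (∀ g : GL (Fin 1 ⊕ (Fin (n - 1) ⊕ Fin 1)) ℂ,
        g ∈ Wgrp ↔ ∃ (w : ℂ) (v y : Fin (n - 1) → ℂ),
          (g : Matrix (Fin 1 ⊕ (Fin (n - 1) ⊕ Fin 1)) (Fin 1 ⊕ (Fin (n - 1) ⊕ Fin 1)) ℂ) =
            (fun i j => match i, j with
              | Sum.inl _, Sum.inl _ => 1
              | Sum.inl _, Sum.inr (Sum.inl j') => v j'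
              | Sum.inl _, Sum.inr (Sum.inr _) => w
              | Sum.inr (Sum.inl i'), Sum.inr (Sum.inl j') => if i' = j' then 1 else 0
              | Sum.inr (Sum.inl i'), Sum.inr (Sum.inr _) => y i'
              | Sum.inr (Sum.inr _), Sum.inr (Sum.inr _) => 1
              | _, _ => 0) ∧
          B.mulVec y + a • star v = 0 ∧
          star y ⬝ᵥ B.mulVec y + (starRingEnd ℂ) a * w + a * (starRingEnd ℂ) w = 0) ∧
      (∀ g : Wgrp, g ∈ Subgroup.center Wgrp ↔ ∃ x : ℝ,
        ((g : GL (Fin 1 ⊕ (Fin (n - 1) ⊕ Fin 1)) ℂ) :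
            Matrix (Fin 1 ⊕ (Fin (n - 1) ⊕ Fin 1)) (Fin 1 ⊕ (Fin (n - 1) ⊕ Fin 1)) ℂ) =
          (fun i j => match i, j with
            | Sum.inl _, Sum.inl _ => 1
            | Sum.inl _, Sum.inr (Sum.inr _) => Complex.I * a * (x : ℂ)
            | Sum.inr (Sum.inl i'), Sum.inr (Sum.inl j') => if i' = j' then 1 else 0
            | Sum.inr (Sum.inr _), Sum.inr (Sum.inr _) => 1
            | _, _ => 0)) := by
  refine ⟨Heisenberg.subgroup a B hB, fun g => ?_, fun g => ?_⟩
  · refine exists_congr fun w => exists_congr fun v => exists_congr fun y =>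
      and_congr_left' (Eq.congr_right ?_)
    ext (i | i | i) (j | j | j) <;> rfl
  · rw [Heisenberg.mem_center_subgroup_iff ha hB hBdet]
    refine exists_congr fun x => Eq.congr_right ?_
    ext (i | i | i) (j | j | j) <;> rfl
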